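/- arXiv:1005.4769 — 10 statements merged into one kernel-verified Lean document; each statement's English description precedes it below -/
import Mathlib

section
/- Suppose the link success probabilities a = (a_A, a_B, a_CD, a_E, a_F) and a' = (a'_A, a'_B, a'_CD, a'_E, a'_F) both lie in (0,1]^5 and give rise to the same observation probabilities, i.e. p_i(a) = p_i(a') for every i ∈ {1,…,9}. Then a = a'. (In other words, the map a ↦ (p₁(a),…,p₉(a)) is injective on (0,1]^5, so all five links of the network-coded five-link tree are identifiable.) -/
/-- Probabilities of the nine informative observations in the network-coded
five-link tree (sources A, B; middle link CD; receivers E, F). -/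
noncomputable def p1 (aA aB aCD aE aF : ℝ) : ℝ := aA * (1 - aB) * aCD * aE * (1 - aF)
noncomputable def p2 (aA aB aCD aE aF : ℝ) : ℝ := (1 - aA) * aB * aCD * aE * (1 - aF)
noncomputable def p3 (aA aB aCD aE aF : ℝ) : ℝ := aA * aB * aCD * aE * (1 - aF)
noncomputable def p4 (aA aB aCD aE aF : ℝ) : ℝ := aA * (1 - aB) * aCD * (1 - aE) * aF
noncomputable def p5 (aA aB aCD aE aF : ℝ) : ℝ := (1 - aA) * aB * aCD * (1 - aE) * aF
noncomputable def p6 (aA aB aCD aE aF : ℝ) : ℝ := aA * aB * aCD * (1 - aE) * aF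
noncomputable def p7 (aA aB aCD aE aF : ℝ) : ℝ := aA * (1 - aB) * aCD * aE * aF
noncomputable def p8 (aA aB aCD aE aF : ℝ) : ℝ := (1 - aA) * aB * aCD * aE * aF
noncomputable def p9 (aA aB aCD aE aF : ℝ) : ℝ := aA * aB * aCD * aE * aF

/-!
Each of `p₃, p₆, p₇, p₈` differs from `p₉` only in the factor of a single link `ℓ`
(`ā_F, ā_E, ā_B, ā_A` instead of `a_F, a_E, a_B, a_A`), so `p_i + p₉` is the product of the other
four links and `p₉ = (p_i + p₉) · a_ℓ`: the link is recovered as `a_ℓ = p₉ / (p_i + p₉)`.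
Once `a_A, a_B, a_E, a_F` are known, `a_CD` is recovered from `p₉` itself.
-/

section MarginalIdentities

variable (aA aB aCD aE aF : ℝ)

theorem p3_add_p9 : p3 aA aB aCD aE aF + p9 aA aB aCD aE aF = aA * aB * aCD * aE := by
  unfold p3 p9; ring

theorem p6_add_p9 : p6 aA aB aCD aE aF + p9 aA aB aCD aE aF = aA * aB * aCD * aF := by
  unfold p6 p9; ring

theorem p7_add_p9 : p7 aA aB aCD aE aF + p9 aA aB aCD aE aF = aA * aCD * aE * aF := by
  unfold p7 p9; ring

theorem p8_add_p9 : p8 aA aB aCD aE aF + p9 aA aB aCD aE aF = aB * aCD * aE * aF := by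
  unfold p8 p9; ring

theorem p9_eq_p3_add_p9_mul :
    p9 aA aB aCD aE aF = (p3 aA aB aCD aE aF + p9 aA aB aCD aE aF) * aF := by
  rw [p3_add_p9]; rfl

theorem p9_eq_p6_add_p9_mul :
    p9 aA aB aCD aE aF = (p6 aA aB aCD aE aF + p9 aA aB aCD aE aF) * aE := by
  rw [p6_add_p9]; unfold p9; ring

theorem p9_eq_p7_add_p9_mul :
    p9 aA aB aCD aE aF = (p7 aA aB aCD aE aF + p9 aA aB aCD aE aF) * aB := by
  rw [p7_add_p9]; unfold p9; ring

theorem p9_eq_p8_add_p9_mul :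
    p9 aA aB aCD aE aF = (p8 aA aB aCD aE aF + p9 aA aB aCD aE aF) * aA := by
  rw [p8_add_p9]; unfold p9; ring

end MarginalIdentities

section LinkIdentification

variable {aA aB aCD aE aF aA' aB' aCD' aE' aF' : ℝ}

theorem aF_eq_of_p3_eq_of_p9_eq (hc : aA * aB * aCD * aE ≠ 0)
    (h3 : p3 aA aB aCD aE aF = p3 aA' aB' aCD' aE' aF')
    (h9 : p9 aA aB aCD aE aF = p9 aA' aB' aCD' aE' aF') : aF = aF' := by
  rw [← p3_add_p9 aA aB aCD aE aF] at hc
  refine mul_left_cancel₀ hc ?_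
  rw [← p9_eq_p3_add_p9_mul, h3, h9, ← p9_eq_p3_add_p9_mul]

theorem aE_eq_of_p6_eq_of_p9_eq (hc : aA * aB * aCD * aF ≠ 0)
    (h6 : p6 aA aB aCD aE aF = p6 aA' aB' aCD' aE' aF')
    (h9 : p9 aA aB aCD aE aF = p9 aA' aB' aCD' aE' aF') : aE = aE' := by
  rw [← p6_add_p9 aA aB aCD aE aF] at hc
  refine mul_left_cancel₀ hc ?_
  rw [← p9_eq_p6_add_p9_mul, h6, h9, ← p9_eq_p6_add_p9_mul]

theorem aB_eq_of_p7_eq_of_p9_eq (hc : aA * aCD * aE * aF ≠ 0)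
    (h7 : p7 aA aB aCD aE aF = p7 aA' aB' aCD' aE' aF')
    (h9 : p9 aA aB aCD aE aF = p9 aA' aB' aCD' aE' aF') : aB = aB' := by
  rw [← p7_add_p9 aA aB aCD aE aF] at hc
  refine mul_left_cancel₀ hc ?_
  rw [← p9_eq_p7_add_p9_mul, h7, h9, ← p9_eq_p7_add_p9_mul]

theorem aA_eq_of_p8_eq_of_p9_eq (hc : aB * aCD * aE * aF ≠ 0)
    (h8 : p8 aA aB aCD aE aF = p8 aA' aB' aCD' aE' aF')
    (h9 : p9 aA aB aCD aE aF = p9 aA' aB' aCD' aE' aF') : aA = aA' := by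
  rw [← p8_add_p9 aA aB aCD aE aF] at hc
  refine mul_left_cancel₀ hc ?_
  rw [← p9_eq_p8_add_p9_mul, h8, h9, ← p9_eq_p8_add_p9_mul]

theorem aCD_eq_of_p9_eq (hc : aA * aB * aE * aF ≠ 0)
    (h9 : p9 aA aB aCD aE aF = p9 aA aB aCD' aE aF) : aCD = aCD' := by
  refine mul_left_cancel₀ hc ?_
  unfold p9 at h9
  linear_combination h9

end LinkIdentification

theorem five_link_identifiability_general
    (aA aB aCD aE aF aA' aB' aCD' aE' aF' : ℝ)
    (hA : aA ∈ Set.Ioc (0:ℝ) 1) (hB : aB ∈ Set.Ioc (0:ℝ) 1)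
    (hCD : aCD ∈ Set.Ioc (0:ℝ) 1) (hE : aE ∈ Set.Ioc (0:ℝ) 1)
    (hF : aF ∈ Set.Ioc (0:ℝ) 1)
    (h3 : p3 aA aB aCD aE aF = p3 aA' aB' aCD' aE' aF')
    (h6 : p6 aA aB aCD aE aF = p6 aA' aB' aCD' aE' aF')
    (h7 : p7 aA aB aCD aE aF = p7 aA' aB' aCD' aE' aF')
    (h8 : p8 aA aB aCD aE aF = p8 aA' aB' aCD' aE' aF')
    (h9 : p9 aA aB aCD aE aF = p9 aA' aB' aCD' aE' aF') :
    aA = aA' ∧ aB = aB' ∧ aCD = aCD' ∧ aE = aE' ∧ aF = aF' := by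
  have := hA.1; have := hB.1; have := hCD.1; have := hE.1; have := hF.1
  obtain rfl := aA_eq_of_p8_eq_of_p9_eq (by positivity) h8 h9
  obtain rfl := aB_eq_of_p7_eq_of_p9_eq (by positivity) h7 h9
  obtain rfl := aE_eq_of_p6_eq_of_p9_eq (by positivity) h6 h9
  obtain rfl := aF_eq_of_p3_eq_of_p9_eq (by positivity) h3 h9
  exact ⟨rfl, rfl, aCD_eq_of_p9_eq (by positivity) h9, rfl, rfl⟩

/-- Identifiability of all five links of the network-coded five-link tree:
the map `a ↦ (p₁(a),…,p₉(a))` is injective on `(0,1]^5`. -/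
theorem five_link_identifiability
    (aA aB aCD aE aF aA' aB' aCD' aE' aF' : ℝ)
    (hA : aA ∈ Set.Ioc (0:ℝ) 1) (hB : aB ∈ Set.Ioc (0:ℝ) 1)
    (hCD : aCD ∈ Set.Ioc (0:ℝ) 1) (hE : aE ∈ Set.Ioc (0:ℝ) 1)
    (hF : aF ∈ Set.Ioc (0:ℝ) 1)
    (hA' : aA' ∈ Set.Ioc (0:ℝ) 1) (hB' : aB' ∈ Set.Ioc (0:ℝ) 1)
    (hCD' : aCD' ∈ Set.Ioc (0:ℝ) 1) (hE' : aE' ∈ Set.Ioc (0:ℝ) 1)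
    (hF' : aF' ∈ Set.Ioc (0:ℝ) 1)
    (h1 : p1 aA aB aCD aE aF = p1 aA' aB' aCD' aE' aF')
    (h2 : p2 aA aB aCD aE aF = p2 aA' aB' aCD' aE' aF')
    (h3 : p3 aA aB aCD aE aF = p3 aA' aB' aCD' aE' aF')
    (h4 : p4 aA aB aCD aE aF = p4 aA' aB' aCD' aE' aF')
    (h5 : p5 aA aB aCD aE aF = p5 aA' aB' aCD' aE' aF')
    (h6 : p6 aA aB aCD aE aF = p6 aA' aB' aCD' aE' aF')
    (h7 : p7 aA aB aCD aE aF = p7 aA' aB' aCD' aE' aF')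
    (h8 : p8 aA aB aCD aE aF = p8 aA' aB' aCD' aE' aF')
    (h9 : p9 aA aB aCD aE aF = p9 aA' aB' aCD' aE' aF') :
    aA = aA' ∧ aB = aB' ∧ aCD = aCD' ∧ aE = aE' ∧ aF = aF' :=
  five_link_identifiability_general aA aB aCD aE aF aA' aB' aCD' aE' aF' hA hB hCD hE hF h3 h6 h7 h8
    h9
end

section
/- For any link success probabilities (a_A, a_B, a_CD, a_E, a_F) ∈ (0,1]^5, the quantity γʳ_B is strictly positive and a_A·γʳ_B = γʳ_A + γʳ_B − γʳ_C; symmetrically, γʳ_A > 0 and a_B·γʳ_A = γʳ_A + γʳ_B − γʳ_C. (This is the exact inversion underlying the maximum-likelihood estimates α̂_A = (γʳ_A+γʳ_B−γʳ_C)/γʳ_B and α̂_B = (γʳ_A+γʳ_B−γʳ_C)/γʳ_A.) -/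
/-- γʳ_A : probability that at least one received probe contains `x₁`. -/
noncomputable def gammaRA (aA aB aCD aE aF : ℝ) : ℝ :=
  p1 aA aB aCD aE aF + p3 aA aB aCD aE aF + p4 aA aB aCD aE aF +
    p6 aA aB aCD aE aF + p7 aA aB aCD aE aF + p9 aA aB aCD aE aF

/-- γʳ_B : probability that at least one received probe contains `x₂`. -/
noncomputable def gammaRB (aA aB aCD aE aF : ℝ) : ℝ :=
  p2 aA aB aCD aE aF + p3 aA aB aCD aE aF + p5 aA aB aCD aE aF +
    p6 aA aB aCD aE aF + p8 aA aB aCD aE aF + p9 aA aB aCD aE aF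

/-- γʳ_C = γᵐ_D : probability that something is received. -/
noncomputable def gammaRC (aA aB aCD aE aF : ℝ) : ℝ :=
  p1 aA aB aCD aE aF + p2 aA aB aCD aE aF + p3 aA aB aCD aE aF +
    p4 aA aB aCD aE aF + p5 aA aB aCD aE aF + p6 aA aB aCD aE aF +
    p7 aA aB aCD aE aF + p8 aA aB aCD aE aF + p9 aA aB aCD aE aF

/-- γᵐ_E : probability that receiver E receives a probe. -/
noncomputable def gammaME (aA aB aCD aE aF : ℝ) : ℝ :=
  p1 aA aB aCD aE aF + p2 aA aB aCD aE aF + p3 aA aB aCD aE aF +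
    p7 aA aB aCD aE aF + p8 aA aB aCD aE aF + p9 aA aB aCD aE aF

/-- γᵐ_F : probability that receiver F receives a probe. -/
noncomputable def gammaMF (aA aB aCD aE aF : ℝ) : ℝ :=
  p4 aA aB aCD aE aF + p5 aA aB aCD aE aF + p6 aA aB aCD aE aF +
    p7 aA aB aCD aE aF + p8 aA aB aCD aE aF + p9 aA aB aCD aE aF

/-- γᵐ_D = γʳ_C. -/
noncomputable def gammaMD (aA aB aCD aE aF : ℝ) : ℝ := gammaRC aA aB aCD aE aF

def unionProb (a b : ℝ) : ℝ := 1 - (1 - a) * (1 - b)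

theorem add_sub_unionProb (a b : ℝ) : a + b - unionProb a b = a * b := by
  unfold unionProb; ring

theorem unionProb_pos {a b : ℝ} (ha : 0 < a) (ha1 : a ≤ 1) (hb : 0 ≤ b) :
    0 < unionProb a b := by
  have : 0 ≤ b * (1 - a) := mul_nonneg hb (by linarith)
  calc 0 < a := ha
    _ ≤ a + b * (1 - a) := by linarith
    _ = unionProb a b := by unfold unionProb; ring

section Factorization

variable (aA aB aCD aE aF : ℝ)

theorem gammaRA_eq : gammaRA aA aB aCD aE aF = aA * aCD * unionProb aE aF := by
  simp only [gammaRA, p1, p3, p4, p6, p7, p9, unionProb]; ring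

theorem gammaRB_eq : gammaRB aA aB aCD aE aF = aB * aCD * unionProb aE aF := by
  simp only [gammaRB, p2, p3, p5, p6, p8, p9, unionProb]; ring

theorem gammaRC_eq :
    gammaRC aA aB aCD aE aF = unionProb aA aB * aCD * unionProb aE aF := by
  simp only [gammaRC, p1, p2, p3, p4, p5, p6, p7, p8, p9, unionProb]; ring

theorem gammaRA_add_gammaRB_sub_gammaRC :
    gammaRA aA aB aCD aE aF + gammaRB aA aB aCD aE aF - gammaRC aA aB aCD aE aF =
      aA * aB * aCD * unionProb aE aF := by
  rw [gammaRA_eq, gammaRB_eq, gammaRC_eq, ← add_sub_unionProb aA aB]; ring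

end Factorization

/-- The exact inversion underlying the MLEs
`α̂_A = (γʳ_A+γʳ_B−γʳ_C)/γʳ_B` and `α̂_B = (γʳ_A+γʳ_B−γʳ_C)/γʳ_A`. -/
theorem mle_inversion_sources
    (aA aB aCD aE aF : ℝ)
    (hA : aA ∈ Set.Ioc (0:ℝ) 1) (hB : aB ∈ Set.Ioc (0:ℝ) 1)
    (hCD : aCD ∈ Set.Ioc (0:ℝ) 1) (hE : aE ∈ Set.Ioc (0:ℝ) 1)
    (hF : aF ∈ Set.Ioc (0:ℝ) 1) :
    0 < gammaRB aA aB aCD aE aF ∧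
    aA * gammaRB aA aB aCD aE aF =
      gammaRA aA aB aCD aE aF + gammaRB aA aB aCD aE aF - gammaRC aA aB aCD aE aF ∧
    0 < gammaRA aA aB aCD aE aF ∧
    aB * gammaRA aA aB aCD aE aF =
      gammaRA aA aB aCD aE aF + gammaRB aA aB aCD aE aF - gammaRC aA aB aCD aE aF := by
  obtain ⟨hA0, -⟩ := hA
  obtain ⟨hB0, -⟩ := hB
  obtain ⟨hCD0, -⟩ := hCD
  have hEF := unionProb_pos hE.1 hE.2 hF.1.le
  rw [gammaRA_add_gammaRB_sub_gammaRC, gammaRA_eq, gammaRB_eq]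
  refine ⟨by positivity, by ring, by positivity, by ring⟩
end

section
/- For any link success probabilities (a_A, a_B, a_CD, a_E, a_F) ∈ (0,1]^5, the quantity γᵐ_F is strictly positive and a_E·γᵐ_F = γᵐ_E + γᵐ_F − γᵐ_D; symmetrically, γᵐ_E > 0 and a_F·γᵐ_E = γᵐ_E + γᵐ_F − γᵐ_D. (This is the exact inversion underlying the maximum-likelihood estimates α̂_E = (γᵐ_E+γᵐ_F−γᵐ_D)/γᵐ_F and α̂_F = (γᵐ_E+γᵐ_F−γᵐ_D)/γᵐ_E.) -/
/-! Each informative observation factors as (C receives a probe) × (link CD works) × (the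
pattern at the receivers), so with `s = 1 - āA·āB` we get `γᵐ_E = s·aCD·aE`, `γᵐ_F = s·aCD·aF`
and `γᵐ_D = s·aCD·(1 - āE·āF)`; inclusion–exclusion then gives
`γᵐ_E + γᵐ_F - γᵐ_D = s·aCD·aE·aF`, and dividing by `γᵐ_F` or `γᵐ_E` recovers `aE` or `aF`. -/

def probEither (a b : ℝ) : ℝ := 1 - (1 - a) * (1 - b)

lemma probEither_pos {a b : ℝ} (ha₀ : 0 < a) (ha₁ : a ≤ 1) (hb : 0 ≤ b) :
    0 < probEither a b := by
  unfold probEither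
  nlinarith [mul_nonneg hb (sub_nonneg.mpr ha₁)]

section Factorization

variable (aA aB aCD aE aF : ℝ)

lemma gammaME_eq : gammaME aA aB aCD aE aF = probEither aA aB * aCD * aE := by
  simp only [gammaME, probEither, p1, p2, p3, p7, p8, p9]
  ring

lemma gammaMF_eq : gammaMF aA aB aCD aE aF = probEither aA aB * aCD * aF := by
  simp only [gammaMF, probEither, p4, p5, p6, p7, p8, p9]
  ring

lemma gammaMD_eq :
    gammaMD aA aB aCD aE aF = probEither aA aB * aCD * probEither aE aF := by
  simp only [gammaMD, gammaRC, probEither, p1, p2, p3, p4, p5, p6, p7, p8, p9]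
  ring

lemma gammaME_add_gammaMF_sub_gammaMD :
    gammaME aA aB aCD aE aF + gammaMF aA aB aCD aE aF - gammaMD aA aB aCD aE aF =
      probEither aA aB * aCD * aE * aF := by
  rw [gammaME_eq, gammaMF_eq, gammaMD_eq]
  unfold probEither
  ring

end Factorization

/-- The exact inversion underlying the MLEs
`α̂_E = (γᵐ_E+γᵐ_F−γᵐ_D)/γᵐ_F` and `α̂_F = (γᵐ_E+γᵐ_F−γᵐ_D)/γᵐ_E`. -/
theorem mle_inversion_receivers
    (aA aB aCD aE aF : ℝ)
    (hA : aA ∈ Set.Ioc (0:ℝ) 1) (hB : aB ∈ Set.Ioc (0:ℝ) 1)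
    (hCD : aCD ∈ Set.Ioc (0:ℝ) 1) (hE : aE ∈ Set.Ioc (0:ℝ) 1)
    (hF : aF ∈ Set.Ioc (0:ℝ) 1) :
    0 < gammaMF aA aB aCD aE aF ∧
    aE * gammaMF aA aB aCD aE aF =
      gammaME aA aB aCD aE aF + gammaMF aA aB aCD aE aF - gammaMD aA aB aCD aE aF ∧
    0 < gammaME aA aB aCD aE aF ∧
    aF * gammaME aA aB aCD aE aF =
      gammaME aA aB aCD aE aF + gammaMF aA aB aCD aE aF - gammaMD aA aB aCD aE aF := by
  have hs : 0 < probEither aA aB := probEither_pos hA.1 hA.2 hB.1.le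
  have hCD₀ := hCD.1
  have hE₀ := hE.1
  have hF₀ := hF.1
  rw [gammaME_add_gammaMF_sub_gammaMD, gammaME_eq, gammaMF_eq]
  exact ⟨by positivity, by ring, by positivity, by ring⟩
end

section
/- There exist two parameter vectors a = (a_A, a_B, a_CD, a_E, a_F) and a' = (a'_A, a'_B, a'_CD, a'_E, a'_F) in (0,1]^5 with a_CD ≠ a'_CD such that all observation probabilities of both multicast trees coincide: a_A·a_CD·a_E·a_F = a'_A·a'_CD·a'_E·a'_F, a_A·a_CD·a_E·(1−a_F) = a'_A·a'_CD·a'_E·(1−a'_F), a_A·a_CD·(1−a_E)·a_F = a'_A·a'_CD·(1−a'_E)·a'_F, and the three analogous equalities with a_A, a'_A replaced by a_B, a'_B. Hence without network coding at node C, the middle link CD of the five-link tree is not identifiable from the two multicast-tree experiments. -/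
/-! Every probe crosses `CD` right after its first hop `AC` or `BC`, so the observations
depend on `a_A, a_B, a_CD` only through the products `a_A a_CD` and `a_B a_CD`. Moving a
factor `2` from the first hops onto `CD` is therefore invisible:
`(1, 1, 1/2, 1, 1)` and `(1/2, 1/2, 1, 1, 1)` give the same observations. -/

theorem tree_observations_eq_of_mul_eq {s cd s' cd' : ℝ} (e f : ℝ) (h : s * cd = s' * cd') :
    s * cd * e * f = s' * cd' * e * f ∧
      s * cd * e * (1 - f) = s' * cd' * e * (1 - f) ∧
      s * cd * (1 - e) * f = s' * cd' * (1 - e) * f := by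
  rw [h]
  exact ⟨rfl, rfl, rfl⟩

/-- Without network coding, the middle link `CD` of the five-link tree is not
identifiable from the two multicast-tree experiments: there exist two parameter
vectors in `(0,1]^5` that differ on the middle link yet induce identical
observation probabilities on both multicast trees. -/
theorem multicast_trees_middle_link_not_identifiable :
    ∃ aA aB aCD aE aF aA' aB' aCD' aE' aF' : ℝ,
      aA ∈ Set.Ioc (0:ℝ) 1 ∧ aB ∈ Set.Ioc (0:ℝ) 1 ∧ aCD ∈ Set.Ioc (0:ℝ) 1 ∧
      aE ∈ Set.Ioc (0:ℝ) 1 ∧ aF ∈ Set.Ioc (0:ℝ) 1 ∧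
      aA' ∈ Set.Ioc (0:ℝ) 1 ∧ aB' ∈ Set.Ioc (0:ℝ) 1 ∧ aCD' ∈ Set.Ioc (0:ℝ) 1 ∧
      aE' ∈ Set.Ioc (0:ℝ) 1 ∧ aF' ∈ Set.Ioc (0:ℝ) 1 ∧
      aCD ≠ aCD' ∧
      aA * aCD * aE * aF = aA' * aCD' * aE' * aF' ∧
      aA * aCD * aE * (1 - aF) = aA' * aCD' * aE' * (1 - aF') ∧
      aA * aCD * (1 - aE) * aF = aA' * aCD' * (1 - aE') * aF' ∧
      aB * aCD * aE * aF = aB' * aCD' * aE' * aF' ∧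
      aB * aCD * aE * (1 - aF) = aB' * aCD' * aE' * (1 - aF') ∧
      aB * aCD * (1 - aE) * aF = aB' * aCD' * (1 - aE') * aF' := by
  have h_products : (1 : ℝ) * (1 / 2) = 1 / 2 * 1 := by norm_num
  obtain ⟨h_both, h_onlyE, h_onlyF⟩ := tree_observations_eq_of_mul_eq 1 1 h_products
  refine ⟨1, 1, 1 / 2, 1, 1, 1 / 2, 1 / 2, 1, 1, 1, ?_, ?_, ?_, ?_, ?_, ?_, ?_, ?_, ?_, ?_, ?_,
    h_both, h_onlyE, h_onlyF, h_both, h_onlyE, h_onlyF⟩ <;> norm_num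
end

section
/- The map (a, b, c) ↦ (a·(1−b)·c, (1−a)·b·c, a·b·c) is injective on (0,1]³. Consequently, all three links of the three-link reverse multicast tree are identifiable from the observation distribution at the single receiver. -/
/-!
Adding the probability of receiving `x₁ ⊕ x₂` to that of receiving `x₁` alone gives `a c`, the
probability that `x₁` gets through; likewise for `x₂` one gets `b c`. Then `b = abc / ac`,
`c = bc / b` and `a = ac / c` are read off the observations.
-/

section ReverseMulticast

variable {R : Type*} [CommRing R]

theorem mul_one_sub_mul_add_mul_mul (a b c : R) : a * (1 - b) * c + a * b * c = a * c := by
  ring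

theorem one_sub_mul_mul_add_mul_mul (a b c : R) : (1 - a) * b * c + a * b * c = b * c := by
  ring

theorem reverseMulticast_links_eq_of_observations_eq [IsDomain R] {a b c a' b' c' : R}
    (ha : a ≠ 0) (hb : b ≠ 0) (hc : c ≠ 0)
    (h1 : a * (1 - b) * c = a' * (1 - b') * c')
    (h2 : (1 - a) * b * c = (1 - a') * b' * c')
    (h3 : a * b * c = a' * b' * c') :
    a = a' ∧ b = b' ∧ c = c' := by
  have hac : a * c = a' * c' := by
    rw [← mul_one_sub_mul_add_mul_mul, ← mul_one_sub_mul_add_mul_mul a' b' c', h1, h3]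
  have hbc : b * c = b' * c' := by
    rw [← one_sub_mul_mul_add_mul_mul, ← one_sub_mul_mul_add_mul_mul a' b' c', h2, h3]
  obtain rfl : b = b' :=
    mul_left_cancel₀ (mul_ne_zero ha hc) (by linear_combination h3 - b' * hac)
  obtain rfl : c = c' := mul_left_cancel₀ hb hbc
  exact ⟨mul_right_cancel₀ hc hac, rfl, rfl⟩

end ReverseMulticast

theorem reverse_multicast_three_link_identifiability_general
    (a b c a' b' c' : ℝ)
    (ha : a ∈ Set.Ioc (0:ℝ) 1) (hb : b ∈ Set.Ioc (0:ℝ) 1) (hc : c ∈ Set.Ioc (0:ℝ) 1)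
    (h1 : a * (1 - b) * c = a' * (1 - b') * c')
    (h2 : (1 - a) * b * c = (1 - a') * b' * c')
    (h3 : a * b * c = a' * b' * c') :
    a = a' ∧ b = b' ∧ c = c' :=
  reverseMulticast_links_eq_of_observations_eq ha.1.ne' hb.1.ne' hc.1.ne' h1 h2 h3

/-- The three links of the three-link reverse multicast tree are identifiable:
the map `(a, b, c) ↦ (a(1−b)c, (1−a)bc, abc)` is injective on `(0,1]³`. -/
theorem reverse_multicast_three_link_identifiability
    (a b c a' b' c' : ℝ)
    (ha : a ∈ Set.Ioc (0:ℝ) 1) (hb : b ∈ Set.Ioc (0:ℝ) 1) (hc : c ∈ Set.Ioc (0:ℝ) 1)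
    (ha' : a' ∈ Set.Ioc (0:ℝ) 1) (hb' : b' ∈ Set.Ioc (0:ℝ) 1) (hc' : c' ∈ Set.Ioc (0:ℝ) 1)
    (h1 : a * (1 - b) * c = a' * (1 - b') * c')
    (h2 : (1 - a) * b * c = (1 - a') * b' * c')
    (h3 : a * b * c = a' * b' * c') :
    a = a' ∧ b = b' ∧ c = c' :=
  reverse_multicast_three_link_identifiability_general a b c a' b' c' ha hb hc h1 h2 h3
end

section
/- The map (c, e, f) ↦ (c·e·f, c·e·(1−f), c·(1−e)·f) is injective on (0,1]³. Consequently, all three links of the three-link multicast tree are identifiable from the joint observation distribution at the two receivers. -/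
/-! Summing the outcomes in which E (resp. F) receives the probe recovers the path rates
`c e` and `c f`; then `f = cef / ce`, `c = cf / f` and `e = ce / c`. -/

theorem multicast_eq_of_outcomes_eq {R : Type*} [CommRing R] [IsDomain R] {c e f c' e' f' : R}
    (hc : c ≠ 0) (he : e ≠ 0) (hf : f ≠ 0)
    (h1 : c * e * f = c' * e' * f')
    (h2 : c * e * (1 - f) = c' * e' * (1 - f'))
    (h3 : c * (1 - e) * f = c' * (1 - e') * f') :
    c = c' ∧ e = e' ∧ f = f' := by
  have hce : c * e = c' * e' := by linear_combination h1 + h2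
  have hcf : c * f = c' * f' := by linear_combination h1 + h3
  have hff : f = f' := mul_left_cancel₀ (mul_ne_zero hc he) (by rw [h1, hce])
  have hcc : c = c' := mul_right_cancel₀ hf (by rw [hcf, hff])
  have hee : e = e' := mul_left_cancel₀ hc (by rw [hce, hcc])
  exact ⟨hcc, hee, hff⟩

theorem multicast_three_link_identifiability_general
    (c e f c' e' f' : ℝ)
    (hc : c ∈ Set.Ioc (0:ℝ) 1) (he : e ∈ Set.Ioc (0:ℝ) 1) (hf : f ∈ Set.Ioc (0:ℝ) 1)
    (h1 : c * e * f = c' * e' * f')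
    (h2 : c * e * (1 - f) = c' * e' * (1 - f'))
    (h3 : c * (1 - e) * f = c' * (1 - e') * f') :
    c = c' ∧ e = e' ∧ f = f' :=
  multicast_eq_of_outcomes_eq hc.1.ne' he.1.ne' hf.1.ne' h1 h2 h3

/-- The three links of the three-link multicast tree are identifiable:
the map `(c, e, f) ↦ (cef, ce(1−f), c(1−e)f)` is injective on `(0,1]³`. -/
theorem multicast_three_link_identifiability
    (c e f c' e' f' : ℝ)
    (hc : c ∈ Set.Ioc (0:ℝ) 1) (he : e ∈ Set.Ioc (0:ℝ) 1) (hf : f ∈ Set.Ioc (0:ℝ) 1)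
    (hc' : c' ∈ Set.Ioc (0:ℝ) 1) (he' : e' ∈ Set.Ioc (0:ℝ) 1) (hf' : f' ∈ Set.Ioc (0:ℝ) 1)
    (h1 : c * e * f = c' * e' * f')
    (h2 : c * e * (1 - f) = c' * e' * (1 - f'))
    (h3 : c * (1 - e) * f = c' * (1 - e') * f') :
    c = c' ∧ e = e' ∧ f = f' :=
  multicast_three_link_identifiability_general c e f c' e' f' hc he hf h1 h2 h3
end

section
/- Let R be a nontrivial commutative ring, σ a type (of edge labels), and S : Fin n → Finset σ a family of edge sets such that for all k ≠ k', S k' is not a subset of S k. For each path k define the path monomial P_k = ∏_{e ∈ S k} X_e in the multivariate polynomial ring over R with variables indexed by σ. Then for any two distinct subsets T, T' of Fin n, the polynomials Σ_{k ∈ T} P_k and Σ_{k ∈ T'} P_k are distinct; equivalently, for any two distinct vectors x, y ∈ {0,1}^n the polynomial Σ_k (x_k − y_k)·P_k is not the zero polynomial. -/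
/-!
A path monomial `∏ e ∈ s, X e` is the monomial with exponent the indicator of `s`, so distinct
edge sets give distinct monomials. The antichain condition makes the paths' edge sets pairwise
distinct; then the coefficient of the `k`-th path monomial in `∑ k ∈ T, P k` is `1` or `0`
according as `k ∈ T` or not, so the probe determines `T`.
-/

open Finset

theorem Finsupp.sum_single_one_injective {σ : Type*} :
    Function.Injective fun s : Finset σ => ∑ e ∈ s, Finsupp.single e 1 := by
  intro s t h
  have hval := congrArg Finsupp.toMultiset h
  simp only [Finsupp.toMultiset_sum_single, one_nsmul] at hval
  exact Finset.val_injective hval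

namespace MvPolynomial

variable {R σ ι : Type*} [CommRing R]

theorem prod_X_eq_monomial_sum_single (s : Finset σ) :
    ∏ e ∈ s, (X e : MvPolynomial σ R) = monomial (∑ e ∈ s, Finsupp.single e 1) 1 :=
  (monomial_sum_one s _).symm

theorem coeff_sum_monomial_one_of_injective [DecidableEq ι] {D : ι → σ →₀ ℕ}
    (hD : Function.Injective D) (T : Finset ι) (k : ι) :
    coeff (D k) (∑ i ∈ T, monomial (D i) (1 : R)) = if k ∈ T then 1 else 0 := by
  classical
  simp only [coeff_sum, coeff_monomial, hD.eq_iff, sum_ite_eq']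

theorem sum_monomial_one_injective [Nontrivial R] {D : ι → σ →₀ ℕ}
    (hD : Function.Injective D) :
    Function.Injective fun T : Finset ι => ∑ i ∈ T, monomial (D i) (1 : R) := by
  classical
  intro T T' h
  ext k
  have hk := congrArg (coeff (D k)) h
  simp only [coeff_sum_monomial_one_of_injective hD] at hk
  split_ifs at hk <;> simp_all

theorem sum_prod_X_injective [Nontrivial R] {S : ι → Finset σ} (hS : Function.Injective S) :
    Function.Injective fun T : Finset ι => ∑ k ∈ T, ∏ e ∈ S k, (X e : MvPolynomial σ R) := by
  simp only [prod_X_eq_monomial_sum_single]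
  exact sum_monomial_one_injective (Finsupp.sum_single_one_injective.comp hS)

end MvPolynomial

/-- Distinct subsets of surviving paths lead to distinct probe polynomials:
if the edge sets of the paths form an antichain under inclusion, then the sums
of path monomials over two distinct subsets of paths are distinct polynomials. -/
theorem distinct_path_subsets_distinct_probes
    (R : Type*) [CommRing R] [Nontrivial R] (σ : Type*) (n : ℕ)
    (S : Fin n → Finset σ)
    (hS : ∀ k k' : Fin n, k ≠ k' → ¬ S k' ⊆ S k)
    (T T' : Finset (Fin n)) (hTT' : T ≠ T') :
    (∑ k ∈ T, ∏ e ∈ S k, (MvPolynomial.X e : MvPolynomial σ R)) ≠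
      ∑ k ∈ T', ∏ e ∈ S k, (MvPolynomial.X e : MvPolynomial σ R) := by
  have hS_inj : Function.Injective S := fun k k' h => by_contra fun hne => hS k k' hne h.ge
  exact fun h => hTT' (MvPolynomial.sum_prod_X_injective hS_inj h)
end

section
/- Let F be a field, m and d natural numbers, S a finite subset of F with |S| = q and d < q, and let f be a nonzero multivariate polynomial in m variables over F whose degree in each individual variable is at most d. Then the number of points x ∈ S^m with f(x) = 0 is at most q^m − (q − d)^m. Equivalently, if each coordinate is chosen independently and uniformly from S, the probability that f evaluates to zero is at most 1 − (1 − d/q)^m. -/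
/-!
Expand `p` in the first variable over the polynomials in the others and let `pₖ` be the leading
coefficient: it is nonzero and its degree in each remaining variable is at most that of `p`. Over
every point `xₜ` of the remaining coordinates with `pₖ(xₜ) ≠ 0`, the restriction `p(·, xₜ)` is a
nonzero univariate polynomial of degree `deg₀ p`, so it has at least `#S₀ - deg₀ p` non-roots in
`S₀`. Induction on the number of variables gives at least `∏ᵢ (#Sᵢ - degᵢ p)` non-roots in
`S₀ × ⋯ × Sₙ₋₁`, and the roots are the complement.
-/

open Finset Fintype

namespace Polynomial

variable {R : Type*} [CommRing R] [IsDomain R] [DecidableEq R]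

lemma card_sub_natDegree_le_card_filter_eval_ne_zero {p : R[X]} (hp : p ≠ 0) (S : Finset R) :
    #S - p.natDegree ≤ #{x ∈ S | p.eval x ≠ 0} := by
  have hroots : #{x ∈ S | p.eval x = 0} ≤ p.natDegree :=
    card_le_degree_of_subset_roots fun x hx ↦ by
      rw [mem_roots hp]
      exact (mem_filter.mp hx).2
  have := card_filter_add_card_filter_not (s := S) (p := fun x ↦ p.eval x = 0)
  simp only [ne_eq]
  omega

end Polynomial

lemma Fin.card_filter_piFinset_eq_sum_card_filter_cons {β : Type*} {n : ℕ}
    (S : Fin (n + 1) → Finset β) (P : (Fin (n + 1) → β) → Prop) [DecidablePred P] :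
    #{x ∈ piFinset S | P x} =
      ∑ xₜ ∈ piFinset (Fin.tail S), #{x₀ ∈ S 0 | P (Fin.cons x₀ xₜ)} := by
  have hS : piFinset S =
      (S 0 ×ˢ piFinset (Fin.tail S)).map (Fin.consEquiv fun _ ↦ β).toEmbedding := by
    simpa using filter_piFinset_eq_map_consEquiv S (fun _ ↦ True)
  simp only [card_filter, hS, sum_map, sum_product_right]
  rfl

namespace MvPolynomial

variable {R : Type*} [CommRing R] [IsDomain R] [DecidableEq R]

lemma card_sub_degreeOf_zero_le_card_filter_eval_cons_ne_zero {n : ℕ}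
    (p : MvPolynomial (Fin (n + 1)) R) {xₜ : Fin n → R}
    (hxₜ : eval xₜ (finSuccEquiv R n p).leadingCoeff ≠ 0) (S : Finset R) :
    #S - p.degreeOf 0 ≤ #{x₀ ∈ S | eval (Fin.cons x₀ xₜ) p ≠ 0} := by
  set pₓ := (finSuccEquiv R n p).map (eval xₜ)
  have hdeg : pₓ.natDegree = p.degreeOf 0 := by
    rw [Polynomial.natDegree_map_of_leadingCoeff_ne_zero _ hxₜ, natDegree_finSuccEquiv]
  have hpₓ : pₓ ≠ 0 := Polynomial.leadingCoeff_ne_zero.mp <| by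
    rwa [Polynomial.leadingCoeff_map_of_leadingCoeff_ne_zero _ hxₜ]
  simpa only [hdeg, eval_eq_eval_mv_eval'] using
    Polynomial.card_sub_natDegree_le_card_filter_eval_ne_zero hpₓ S

theorem prod_card_sub_degreeOf_le_card_filter_eval_ne_zero {n : ℕ} {p : MvPolynomial (Fin n) R}
    (hp : p ≠ 0) (S : Fin n → Finset R) :
    ∏ i, (#(S i) - p.degreeOf i) ≤ #{x ∈ piFinset S | eval x p ≠ 0} := by
  induction n with
  | zero =>
    rw [p.eq_C_of_isEmpty] at hp ⊢
    simp [C_ne_zero.mp hp]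
  | succ n ih =>
    set pₖ := (finSuccEquiv R n p).leadingCoeff
    have hpₖ : pₖ ≠ 0 := by simpa [pₖ] using hp
    set T := piFinset (Fin.tail S)
    have htail :
        ∏ j : Fin n, (#(S j.succ) - p.degreeOf j.succ) ≤ #{xₜ ∈ T | eval xₜ pₖ ≠ 0} :=
      calc ∏ j : Fin n, (#(S j.succ) - p.degreeOf j.succ)
          ≤ ∏ j : Fin n, (#(S j.succ) - pₖ.degreeOf j) := by
            gcongr with j; exact degreeOf_coeff_finSuccEquiv p j _
        _ ≤ #{xₜ ∈ T | eval xₜ pₖ ≠ 0} := ih hpₖ (Fin.tail S)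
    calc ∏ i, (#(S i) - p.degreeOf i)
        = (#(S 0) - p.degreeOf 0) * ∏ j : Fin n, (#(S j.succ) - p.degreeOf j.succ) :=
          Fin.prod_univ_succ _
      _ ≤ ∑ xₜ ∈ T with eval xₜ pₖ ≠ 0, (#(S 0) - p.degreeOf 0) := by
        rw [sum_const, smul_eq_mul, mul_comm]; gcongr
      _ ≤ ∑ xₜ ∈ T with eval xₜ pₖ ≠ 0, #{x₀ ∈ S 0 | eval (Fin.cons x₀ xₜ) p ≠ 0} :=
        sum_le_sum fun xₜ hxₜ ↦
          card_sub_degreeOf_zero_le_card_filter_eval_cons_ne_zero p (mem_filter.mp hxₜ).2 _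
      _ ≤ ∑ xₜ ∈ T, #{x₀ ∈ S 0 | eval (Fin.cons x₀ xₜ) p ≠ 0} :=
        sum_le_sum_of_subset (filter_subset _ _)
      _ = #{x ∈ piFinset S | eval x p ≠ 0} :=
        (Fin.card_filter_piFinset_eq_sum_card_filter_cons S fun x ↦ eval x p ≠ 0).symm

end MvPolynomial

theorem schwartz_zippel_per_variable_degree_general
    (F : Type*) [Field F] [DecidableEq F] (m d q : ℕ)
    (S : Finset F) (hq : S.card = q)
    (f : MvPolynomial (Fin m) F) (hf : f ≠ 0)
    (hdeg : ∀ i : Fin m, f.degreeOf i ≤ d) :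
    ((Fintype.piFinset fun _ : Fin m => S).filter
        (fun x => MvPolynomial.eval x f = 0)).card ≤ q ^ m - (q - d) ^ m := by
  have hnonroots : (q - d) ^ m ≤ #{x ∈ piFinset fun _ ↦ S | MvPolynomial.eval x f ≠ 0} :=
    calc (q - d) ^ m = ∏ _i : Fin m, (q - d) := by simp
      _ ≤ ∏ i, (#S - f.degreeOf i) := by gcongr with i; exacts [hq.ge, hdeg i]
      _ ≤ _ := MvPolynomial.prod_card_sub_degreeOf_le_card_filter_eval_ne_zero hf _
  have hsplit := card_filter_add_card_filter_not (s := piFinset fun _ : Fin m ↦ S)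
    (p := fun x ↦ MvPolynomial.eval x f = 0)
  rw [card_piFinset_const, hq] at hsplit
  simp only [ne_eq] at hnonroots
  omega

/-- Per-variable-degree form of the Schwartz–Zippel lemma: if `f` is a nonzero
polynomial in `m` variables over a field `F` with degree at most `d < q` in
each variable, and `S` is a set of `q` field elements, then `f` has at most
`q^m − (q−d)^m` roots in `S^m`. -/
theorem schwartz_zippel_per_variable_degree
    (F : Type*) [Field F] [DecidableEq F] (m d q : ℕ)
    (S : Finset F) (hq : S.card = q) (hd : d < q)
    (f : MvPolynomial (Fin m) F) (hf : f ≠ 0)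
    (hdeg : ∀ i : Fin m, f.degreeOf i ≤ d) :
    ((Fintype.piFinset fun _ : Fin m => S).filter
        (fun x => MvPolynomial.eval x f = 0)).card ≤ q ^ m - (q - d) ^ m :=
  schwartz_zippel_per_variable_degree_general F m d q S hq f hf hdeg
end

section
/- For the five-link topology with sources A and E and receivers B and F (Case 3), the map sending (a₁, a₂, a₃, a₄, a₅) ∈ (0,1]^5 to the seven observation probabilities (a₁a₂a₃a₄a₅, a₁(1−a₂)a₃a₄a₅, a₁a₂a₃(1−a₄)a₅, a₁(1−a₂)a₃(1−a₄)a₅, a₁a₂(1−a₃)a₄a₅, (1−a₁)a₄a₅ + a₁(1−a₂)(1−a₃)a₄a₅, a₁a₂(1 − a₅(1 − (1−a₃)(1−a₄)))) is injective. Hence all five links are identifiable in Case 3 when network coding is used. -/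
/-! The probability of `(B x₁, F x₁⊕x₂)` is `Pᵢ · aᵢ` and that of the observation obtained by
losing link `i` instead (`i = 2, 4, 3`: the second, third and fifth observations) is
`Pᵢ · (1 - aᵢ)`, with the same product `Pᵢ` of the other four probabilities. Adding recovers
`Pᵢ`, dividing recovers `aᵢ`, and `P₂ / (a₃a₄)` gives `a₁a₅`. Finally `(B nothing, F x₂)` has
probability `a₄ (a₅ - a₁a₅ (1 - (1 - a₂)(1 - a₃)))`, which determines `a₅`, hence `a₁`. -/

theorem eq_and_eq_of_mul_eq_of_mul_one_sub_eq {R : Type*} [CommRing R] [NoZeroDivisors R]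
    {x y x' y' : R} (hx : x ≠ 0) (h : x * y = x' * y') (h' : x * (1 - y) = x' * (1 - y')) :
    x = x' ∧ y = y' := by
  obtain rfl : x = x' := by linear_combination h + h'
  exact ⟨rfl, mul_left_cancel₀ hx h⟩

theorem case3_five_link_identifiability_general
    (a₁ a₂ a₃ a₄ a₅ b₁ b₂ b₃ b₄ b₅ : ℝ)
    (h₁ : a₁ ∈ Set.Ioc (0:ℝ) 1) (h₂ : a₂ ∈ Set.Ioc (0:ℝ) 1)
    (h₃ : a₃ ∈ Set.Ioc (0:ℝ) 1) (h₄ : a₄ ∈ Set.Ioc (0:ℝ) 1)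
    (h₅ : a₅ ∈ Set.Ioc (0:ℝ) 1)
    (e₁ : a₁ * a₂ * a₃ * a₄ * a₅ = b₁ * b₂ * b₃ * b₄ * b₅)
    (e₂ : a₁ * (1 - a₂) * a₃ * a₄ * a₅ = b₁ * (1 - b₂) * b₃ * b₄ * b₅)
    (e₃ : a₁ * a₂ * a₃ * (1 - a₄) * a₅ = b₁ * b₂ * b₃ * (1 - b₄) * b₅)
    (e₅ : a₁ * a₂ * (1 - a₃) * a₄ * a₅ = b₁ * b₂ * (1 - b₃) * b₄ * b₅)
    (e₆ : (1 - a₁) * a₄ * a₅ + a₁ * (1 - a₂) * (1 - a₃) * a₄ * a₅ =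
          (1 - b₁) * b₄ * b₅ + b₁ * (1 - b₂) * (1 - b₃) * b₄ * b₅) :
    a₁ = b₁ ∧ a₂ = b₂ ∧ a₃ = b₃ ∧ a₄ = b₄ ∧ a₅ = b₅ := by
  obtain ⟨ha₁, -⟩ := h₁
  obtain ⟨ha₂, -⟩ := h₂
  obtain ⟨ha₃, -⟩ := h₃
  obtain ⟨ha₄, -⟩ := h₄
  obtain ⟨ha₅, -⟩ := h₅
  obtain ⟨hP, rfl⟩ := eq_and_eq_of_mul_eq_of_mul_one_sub_eq (x := a₁ * a₃ * a₄ * a₅)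
    (y := a₂) (x' := b₁ * b₃ * b₄ * b₅) (y' := b₂)
    (by positivity) (by linear_combination e₁) (by linear_combination e₂)
  obtain ⟨-, rfl⟩ := eq_and_eq_of_mul_eq_of_mul_one_sub_eq (x := a₁ * a₂ * a₃ * a₅)
    (y := a₄) (x' := b₁ * a₂ * b₃ * b₅) (y' := b₄)
    (by positivity) (by linear_combination e₁) (by linear_combination e₃)
  obtain ⟨-, rfl⟩ := eq_and_eq_of_mul_eq_of_mul_one_sub_eq (x := a₁ * a₂ * a₄ * a₅)
    (y := a₃) (x' := b₁ * a₂ * a₄ * b₅) (y' := b₃)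
    (by positivity) (by linear_combination e₁) (by linear_combination e₅)
  have h₁₅ : a₁ * a₅ = b₁ * b₅ :=
    mul_left_cancel₀ (by positivity : a₃ * a₄ ≠ 0) (by linear_combination hP)
  obtain rfl : a₅ = b₅ := mul_left_cancel₀ ha₄.ne' <| by
    linear_combination e₆ + a₄ * (1 - (1 - a₂) * (1 - a₃)) * h₁₅
  exact ⟨mul_right_cancel₀ ha₅.ne' h₁₅, rfl, rfl, rfl, rfl⟩

/-- Case 3 of the five-link topology (sources A and E, receivers B and F,
XOR coding at node D): the map from the link success probabilities
`(a₁,…,a₅) ∈ (0,1]^5` to the seven observation probabilities is injective,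
hence all five links are identifiable. -/
theorem case3_five_link_identifiability
    (a₁ a₂ a₃ a₄ a₅ b₁ b₂ b₃ b₄ b₅ : ℝ)
    (h₁ : a₁ ∈ Set.Ioc (0:ℝ) 1) (h₂ : a₂ ∈ Set.Ioc (0:ℝ) 1)
    (h₃ : a₃ ∈ Set.Ioc (0:ℝ) 1) (h₄ : a₄ ∈ Set.Ioc (0:ℝ) 1)
    (h₅ : a₅ ∈ Set.Ioc (0:ℝ) 1)
    (g₁ : b₁ ∈ Set.Ioc (0:ℝ) 1) (g₂ : b₂ ∈ Set.Ioc (0:ℝ) 1)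
    (g₃ : b₃ ∈ Set.Ioc (0:ℝ) 1) (g₄ : b₄ ∈ Set.Ioc (0:ℝ) 1)
    (g₅ : b₅ ∈ Set.Ioc (0:ℝ) 1)
    (e₁ : a₁ * a₂ * a₃ * a₄ * a₅ = b₁ * b₂ * b₃ * b₄ * b₅)
    (e₂ : a₁ * (1 - a₂) * a₃ * a₄ * a₅ = b₁ * (1 - b₂) * b₃ * b₄ * b₅)
    (e₃ : a₁ * a₂ * a₃ * (1 - a₄) * a₅ = b₁ * b₂ * b₃ * (1 - b₄) * b₅)
    (e₄ : a₁ * (1 - a₂) * a₃ * (1 - a₄) * a₅ = b₁ * (1 - b₂) * b₃ * (1 - b₄) * b₅)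
    (e₅ : a₁ * a₂ * (1 - a₃) * a₄ * a₅ = b₁ * b₂ * (1 - b₃) * b₄ * b₅)
    (e₆ : (1 - a₁) * a₄ * a₅ + a₁ * (1 - a₂) * (1 - a₃) * a₄ * a₅ =
          (1 - b₁) * b₄ * b₅ + b₁ * (1 - b₂) * (1 - b₃) * b₄ * b₅)
    (e₇ : a₁ * a₂ * (1 - a₅ * (1 - (1 - a₃) * (1 - a₄))) =
          b₁ * b₂ * (1 - b₅ * (1 - (1 - b₃) * (1 - b₄)))) :
    a₁ = b₁ ∧ a₂ = b₂ ∧ a₃ = b₃ ∧ a₄ = b₄ ∧ a₅ = b₅ :=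
  case3_five_link_identifiability_general a₁ a₂ a₃ a₄ a₅ b₁ b₂ b₃ b₄ b₅ h₁ h₂ h₃ h₄ h₅ e₁ e₂ e₃ e₅
    e₆
end

section
/- For the five-link topology with sources A, B, E and single receiver F (Case 4, a reverse multicast tree), the map sending (a₁, a₂, a₃, a₄, a₅) ∈ (0,1]^5 to the seven observation probabilities (a₁(1−a₂)a₃(1−a₄)a₅, (1−a₁)a₂a₃(1−a₄)a₅, a₁a₂a₃(1−a₄)a₅, a₄a₅((1−a₃) + a₃(1−a₁)(1−a₂)), a₁(1−a₂)a₃a₄a₅, (1−a₁)a₂a₃a₄a₅, a₁a₂a₃a₄a₅) is injective. Hence all five links are identifiable in Case 4 when network coding is used. -/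
/-! Adding the two observations that differ only in whether `x₃` arrives eliminates `a₄` and
leaves the observations of a two-source XOR tree whose shared path has success probability
`a₃ a₅`; these determine `a₁`, `a₂` and `a₃ a₅`. Dividing the `x₁ ⊕ x₂ ⊕ x₃` observation by
the marginal of `x₁ ⊕ x₂` gives `a₄`, and the `x₃` observation then separates `a₅` from `a₃`. -/

section

variable {R : Type*} [CommRing R] [IsDomain R]

theorem two_source_xor_identifiable {a₁ a₂ t b₁ b₂ s : R}
    (ha₁ : a₁ ≠ 0) (ha₂ : a₂ ≠ 0) (ht : t ≠ 0)
    (h₁ : a₁ * (1 - a₂) * t = b₁ * (1 - b₂) * s)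
    (h₂ : (1 - a₁) * a₂ * t = (1 - b₁) * b₂ * s)
    (h₃ : a₁ * a₂ * t = b₁ * b₂ * s) :
    a₁ = b₁ ∧ a₂ = b₂ ∧ t = s := by
  have hu : a₁ * t = b₁ * s := by linear_combination h₁ + h₃
  have hv : a₂ * t = b₂ * s := by linear_combination h₂ + h₃
  obtain rfl : a₁ = b₁ :=
    mul_right_cancel₀ (mul_ne_zero ha₂ ht) (by linear_combination h₃ - b₁ * hv)
  obtain rfl : a₂ = b₂ :=
    mul_right_cancel₀ (mul_ne_zero ha₁ ht) (by linear_combination h₃ - b₂ * hu)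
  exact ⟨rfl, rfl, mul_left_cancel₀ ha₁ hu⟩

theorem eq_and_eq_of_mul_eq_of_mul_one_sub_add_mul_eq {x y x' y' d : R} (hy : y ≠ 0)
    (hxy : x * y = x' * y') (h : y * (1 - x + x * d) = y' * (1 - x' + x' * d)) :
    x = x' ∧ y = y' := by
  obtain rfl : y = y' := by linear_combination h + (1 - d) * hxy
  exact ⟨mul_right_cancel₀ hy hxy, rfl⟩

end

theorem case4_five_link_identifiability_general
    (a₁ a₂ a₃ a₄ a₅ b₁ b₂ b₃ b₄ b₅ : ℝ)
    (h₁ : a₁ ∈ Set.Ioc (0:ℝ) 1) (h₂ : a₂ ∈ Set.Ioc (0:ℝ) 1)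
    (h₃ : a₃ ∈ Set.Ioc (0:ℝ) 1) (h₄ : a₄ ∈ Set.Ioc (0:ℝ) 1)
    (h₅ : a₅ ∈ Set.Ioc (0:ℝ) 1)
    (e₁ : a₁ * (1 - a₂) * a₃ * (1 - a₄) * a₅ = b₁ * (1 - b₂) * b₃ * (1 - b₄) * b₅)
    (e₂ : (1 - a₁) * a₂ * a₃ * (1 - a₄) * a₅ = (1 - b₁) * b₂ * b₃ * (1 - b₄) * b₅)
    (e₃ : a₁ * a₂ * a₃ * (1 - a₄) * a₅ = b₁ * b₂ * b₃ * (1 - b₄) * b₅)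
    (e₄ : a₄ * a₅ * ((1 - a₃) + a₃ * (1 - a₁) * (1 - a₂)) =
          b₄ * b₅ * ((1 - b₃) + b₃ * (1 - b₁) * (1 - b₂)))
    (e₅ : a₁ * (1 - a₂) * a₃ * a₄ * a₅ = b₁ * (1 - b₂) * b₃ * b₄ * b₅)
    (e₆ : (1 - a₁) * a₂ * a₃ * a₄ * a₅ = (1 - b₁) * b₂ * b₃ * b₄ * b₅)
    (e₇ : a₁ * a₂ * a₃ * a₄ * a₅ = b₁ * b₂ * b₃ * b₄ * b₅) :
    a₁ = b₁ ∧ a₂ = b₂ ∧ a₃ = b₃ ∧ a₄ = b₄ ∧ a₅ = b₅ := by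
  have ha₁ := h₁.1.ne'
  have ha₂ := h₂.1.ne'
  have ha₃ := h₃.1.ne'
  have ha₄ := h₄.1.ne'
  have ha₅ := h₅.1.ne'
  have k₁ : a₁ * (1 - a₂) * (a₃ * a₅) = b₁ * (1 - b₂) * (b₃ * b₅) := by
    linear_combination e₁ + e₅
  have k₂ : (1 - a₁) * a₂ * (a₃ * a₅) = (1 - b₁) * b₂ * (b₃ * b₅) := by
    linear_combination e₂ + e₆
  have k₃ : a₁ * a₂ * (a₃ * a₅) = b₁ * b₂ * (b₃ * b₅) := by
    linear_combination e₃ + e₇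
  obtain ⟨rfl, rfl, h₃₅⟩ :=
    two_source_xor_identifiable ha₁ ha₂ (mul_ne_zero ha₃ ha₅) k₁ k₂ k₃
  obtain rfl : a₄ = b₄ := mul_left_cancel₀
    (mul_ne_zero (mul_ne_zero ha₁ ha₂) (mul_ne_zero ha₃ ha₅)) (by linear_combination e₇ - b₄ * k₃)
  obtain ⟨rfl, rfl⟩ := eq_and_eq_of_mul_eq_of_mul_one_sub_add_mul_eq
    (d := (1 - a₁) * (1 - a₂)) ha₅ h₃₅ (mul_left_cancel₀ ha₄ (by linear_combination e₄))
  exact ⟨rfl, rfl, rfl, rfl, rfl⟩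

/-- Case 4 of the five-link topology (sources A, B, E and single receiver F —
a reverse multicast tree with XOR coding at nodes C and D): the map from the
link success probabilities `(a₁,…,a₅) ∈ (0,1]^5` to the seven observation
probabilities is injective, hence all five links are identifiable. -/
theorem case4_five_link_identifiability
    (a₁ a₂ a₃ a₄ a₅ b₁ b₂ b₃ b₄ b₅ : ℝ)
    (h₁ : a₁ ∈ Set.Ioc (0:ℝ) 1) (h₂ : a₂ ∈ Set.Ioc (0:ℝ) 1)
    (h₃ : a₃ ∈ Set.Ioc (0:ℝ) 1) (h₄ : a₄ ∈ Set.Ioc (0:ℝ) 1)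
    (h₅ : a₅ ∈ Set.Ioc (0:ℝ) 1)
    (g₁ : b₁ ∈ Set.Ioc (0:ℝ) 1) (g₂ : b₂ ∈ Set.Ioc (0:ℝ) 1)
    (g₃ : b₃ ∈ Set.Ioc (0:ℝ) 1) (g₄ : b₄ ∈ Set.Ioc (0:ℝ) 1)
    (g₅ : b₅ ∈ Set.Ioc (0:ℝ) 1)
    (e₁ : a₁ * (1 - a₂) * a₃ * (1 - a₄) * a₅ = b₁ * (1 - b₂) * b₃ * (1 - b₄) * b₅)
    (e₂ : (1 - a₁) * a₂ * a₃ * (1 - a₄) * a₅ = (1 - b₁) * b₂ * b₃ * (1 - b₄) * b₅)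
    (e₃ : a₁ * a₂ * a₃ * (1 - a₄) * a₅ = b₁ * b₂ * b₃ * (1 - b₄) * b₅)
    (e₄ : a₄ * a₅ * ((1 - a₃) + a₃ * (1 - a₁) * (1 - a₂)) =
          b₄ * b₅ * ((1 - b₃) + b₃ * (1 - b₁) * (1 - b₂)))
    (e₅ : a₁ * (1 - a₂) * a₃ * a₄ * a₅ = b₁ * (1 - b₂) * b₃ * b₄ * b₅)
    (e₆ : (1 - a₁) * a₂ * a₃ * a₄ * a₅ = (1 - b₁) * b₂ * b₃ * b₄ * b₅)
    (e₇ : a₁ * a₂ * a₃ * a₄ * a₅ = b₁ * b₂ * b₃ * b₄ * b₅) :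
    a₁ = b₁ ∧ a₂ = b₂ ∧ a₃ = b₃ ∧ a₄ = b₄ ∧ a₅ = b₅ :=
  case4_five_link_identifiability_general a₁ a₂ a₃ a₄ a₅ b₁ b₂ b₃ b₄ b₅ h₁ h₂ h₃ h₄ h₅ e₁ e₂ e₃ e₄
    e₅ e₆ e₇
end
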